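/- Consider a step-down or step-up test whose nondecreasing critical values alpha_1 <= ... <= alpha_n satisfy 0 < alpha_i <= beta_i = i*alpha/(n+1-i*(1-alpha)) for all 1 <= i <= n, with boundary variable tau. If E[V(tau)/beta_{R(tau)}] <= n_0 and E[V(tau)] <= (alpha/(1-alpha))*(n_1+1), then the false discovery rate is controlled at level alpha, i.e. FDR <= alpha. (Here beta_{R(tau)} denotes beta indexed by the total number of rejections R(tau), with beta_0 := beta_1, and V(tau)/beta_{R(tau)} := 0 when V(tau) = 0.) -/

import Mathlib

open MeasureTheory Finset
open scoped Classical

noncomputable section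

variable {Ω : Type*}

/-- Number of p-values with index in `I` that are `≤ t` (e.g. false rejections `V`). -/
def Vc {n : ℕ} (p : Fin n → Ω → ℝ) (I : Finset (Fin n)) (t : ℝ) (ω : Ω) : ℕ :=
  (I.filter fun i => p i ω ≤ t).card

/-- Total number of rejections `R(t)`. -/
def Rc {n : ℕ} (p : Fin n → Ω → ℝ) (t : ℝ) (ω : Ω) : ℕ :=
  (Finset.univ.filter fun i => p i ω ≤ t).card

/-- Critical values `β_i = iα/(n+1-i(1-α))` (note `β_0 = 0`). -/
def beta (n : ℕ) (α : ℝ) (i : ℕ) : ℝ := i * α / (n + 1 - i * (1 - α))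

/-- Step-down boundary: `max {crit i : p_{j:n} ≤ crit j for all j ≤ i}`, max ∅ := 0.
(`p_{j:n} ≤ c ↔ R(c) ≥ j`.) -/
def tauSD {n : ℕ} (p : Fin n → Ω → ℝ) (crit : ℕ → ℝ) (ω : Ω) : ℝ :=
  if h : ((Finset.Icc 1 n).filter fun i =>
      ∀ j ∈ Finset.Icc 1 i, j ≤ Rc p (crit j) ω).Nonempty then
    (((Finset.Icc 1 n).filter fun i =>
      ∀ j ∈ Finset.Icc 1 i, j ≤ Rc p (crit j) ω)).sup' h crit
  else 0

/-- Step-up boundary: `max {crit i : p_{i:n} ≤ crit i}`, max ∅ := 0. -/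
def tauSU {n : ℕ} (p : Fin n → Ω → ℝ) (crit : ℕ → ℝ) (ω : Ω) : ℝ :=
  if h : ((Finset.Icc 1 n).filter fun i => i ≤ Rc p (crit i) ω).Nonempty then
    ((Finset.Icc 1 n).filter fun i => i ≤ Rc p (crit i) ω).sup' h crit
  else 0

/-- FDR estimator `\hat α_n(t)`. -/
def alphaHat {n : ℕ} (p : Fin n → Ω → ℝ) (t : ℝ) (ω : Ω) : ℝ :=
  (t / (1 - t)) * ((1 - (Rc p t ω : ℝ) / n) / ((Rc p t ω : ℝ) / n + 1 / n))

/-- `σ = min {crit i : p_{i:n} > crit i} ∧ crit n` (min ∅ := crit n). -/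
def sigmaB {n : ℕ} (p : Fin n → Ω → ℝ) (crit : ℕ → ℝ) (ω : Ω) : ℝ :=
  min (if h : ((Finset.Icc 1 n).filter fun i => Rc p (crit i) ω < i).Nonempty then
        ((Finset.Icc 1 n).filter fun i => Rc p (crit i) ω < i).inf' h crit
      else crit n) (crit n)

/-- The filtration `F_t^T`, `T = {0, β_1, ..., β_n}` indexed by `k ∈ {0,...,n}`. -/
def Ffilt {n : ℕ} (p : Fin n → Ω → ℝ) (B : ℕ → ℝ) (k : ℕ) : MeasurableSpace Ω :=
  MeasurableSpace.generateFrom {A | ∃ i : Fin n, ∃ j ≤ k, A = {ω | p i ω ≤ B j}}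

/-- The martingale-type process `M_J(t) = ∑_{i∈J} (1(p_i ≤ t) - t)/(1-t)` at `t`. -/
def Mval {n : ℕ} (p : Fin n → Ω → ℝ) (J : Finset (Fin n)) (t : ℝ) (ω : Ω) : ℝ :=
  ∑ i ∈ J, ((if p i ω ≤ t then (1 : ℝ) else 0) - t) / (1 - t)

/-!
For `1 ≤ r ≤ n` the critical values `β_r = rα/(n+1-r(1-α))` are exactly those for which
`1/r = α/((n+1) β_r) + (1-α)/(n+1)`. Hence the false discovery proportion splits pointwise as
`V/R = α/(n+1) · V/β_R + (1-α)/(n+1) · V`, and taking expectations and inserting the two bounds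
gives `FDR ≤ α (n₀ + n₁ + 1)/(n+1) = α`.
-/

section Measurability

variable [MeasurableSpace Ω]

theorem measurable_comp_filter {ι β : Type*} [MeasurableSpace β] (s : Finset ι)
    {c : ι → Ω → Prop} (hc : ∀ i ∈ s, MeasurableSet {ω | c i ω}) (G : Finset ι → β) :
    Measurable fun ω => G (s.filter fun i => c i ω) := by
  have hindicator : Measurable fun ω (i : s) => decide (c i ω) :=
    measurable_pi_iff.2 fun i => measurable_to_bool <| by
      simpa only [Set.preimage, Set.mem_singleton_iff, decide_eq_true_eq] using hc i i.2
  convert (measurable_of_countable fun b : s → Bool =>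
    G (s.filter fun i => ∃ h : i ∈ s, b ⟨i, h⟩)).comp hindicator using 2 with ω
  simp only [Function.comp_apply, decide_eq_true_eq]
  congr 1
  exact Finset.filter_congr fun i hi => by simp [hi]

variable {n : ℕ} {p : Fin n → Ω → ℝ}

theorem measurable_Vc_comp (hp : ∀ i, Measurable (p i)) (I : Finset (Fin n)) {τ : Ω → ℝ}
    (hτ : Measurable τ) : Measurable fun ω => Vc p I (τ ω) ω :=
  measurable_comp_filter I (fun i _ => measurableSet_le (hp i) hτ) Finset.card

theorem measurable_Rc_comp (hp : ∀ i, Measurable (p i)) {τ : Ω → ℝ} (hτ : Measurable τ) :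
    Measurable fun ω => Rc p (τ ω) ω :=
  measurable_Vc_comp hp Finset.univ hτ

theorem measurableSet_le_Rc (hp : ∀ i, Measurable (p i)) (j : ℕ) (t : ℝ) :
    MeasurableSet {ω | j ≤ Rc p t ω} :=
  measurable_Rc_comp hp measurable_const measurableSet_Ici

theorem measurable_tauSD (hp : ∀ i, Measurable (p i)) (crit : ℕ → ℝ) :
    Measurable (tauSD p crit) := by
  refine measurable_comp_filter (Finset.Icc 1 n) (fun i _ => ?_)
    fun T => if h : T.Nonempty then T.sup' h crit else 0
  simp only [Set.ofPred_forall]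
  exact .iInter fun j => .iInter fun _ => measurableSet_le_Rc hp j (crit j)

theorem measurable_tauSU (hp : ∀ i, Measurable (p i)) (crit : ℕ → ℝ) :
    Measurable (tauSU p crit) := by
  -- `tauSU` filters with `Nat.decLe` rather than the classical instance used here.
  unfold tauSU
  convert measurable_comp_filter (Finset.Icc 1 n) (fun i _ => measurableSet_le_Rc hp i (crit i))
    fun T => if h : T.Nonempty then T.sup' h crit else 0

end Measurability

theorem Vc_le_Rc {n : ℕ} (p : Fin n → Ω → ℝ) (I : Finset (Fin n)) (t : ℝ) (ω : Ω) :
    Vc p I t ω ≤ Rc p t ω :=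
  Finset.card_le_card (Finset.filter_subset_filter _ (Finset.subset_univ I))

theorem Rc_le {n : ℕ} (p : Fin n → Ω → ℝ) (t : ℝ) (ω : Ω) : Rc p t ω ≤ n :=
  (Finset.card_filter_le _ _).trans_eq (Finset.card_fin n)

theorem inv_eq_add_inv_beta {n r : ℕ} {α : ℝ} (hα : 0 < α) (hr : r ≠ 0) (hrn : r ≤ n) :
    (r : ℝ)⁻¹ = α / (n + 1) * (beta n α r)⁻¹ + (1 - α) / (n + 1) := by
  have hr' : (0 : ℝ) < r := by positivity
  have hD : (0 : ℝ) < n + 1 - r * (1 - α) := by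
    have : (r : ℝ) ≤ n := by exact_mod_cast hrn
    nlinarith
  rw [beta, inv_div]
  field_simp
  ring

theorem div_eq_add_div_beta {n v r : ℕ} {α : ℝ} (hα : 0 < α) (hvr : v ≤ r) (hrn : r ≤ n) :
    (v : ℝ) / r = α / (n + 1) * (v / beta n α (max r 1)) + (1 - α) / (n + 1) * v := by
  rcases Nat.eq_zero_or_pos v with rfl | hv
  · simp
  have hr : 1 ≤ r := hv.trans_le hvr
  rw [max_eq_left hr, div_eq_mul_inv, div_eq_mul_inv, inv_eq_add_inv_beta hα (by omega) hrn]
  ring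

theorem integral_Vc_div_Rc_eq {n : ℕ} [MeasurableSpace Ω] (μ : Measure Ω) [IsFiniteMeasure μ]
    {p : Fin n → Ω → ℝ} (hp : ∀ i, Measurable (p i)) (I : Finset (Fin n)) {α : ℝ} (hα : 0 < α)
    {τ : Ω → ℝ} (hτ : Measurable τ) :
    ∫ ω, (Vc p I (τ ω) ω : ℝ) / (Rc p (τ ω) ω : ℝ) ∂μ =
      α / (n + 1) * ∫ ω, (Vc p I (τ ω) ω : ℝ) / beta n α (max (Rc p (τ ω) ω) 1) ∂μ +
      (1 - α) / (n + 1) * ∫ ω, (Vc p I (τ ω) ω : ℝ) ∂μ := by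
  set V : Ω → ℕ := fun ω => Vc p I (τ ω) ω
  set R : Ω → ℕ := fun ω => Rc p (τ ω) ω
  have hV : Measurable V := measurable_Vc_comp hp I hτ
  have hR : Measurable R := measurable_Rc_comp hp hτ
  have hsplit (ω : Ω) : (V ω : ℝ) / R ω =
      α / (n + 1) * (V ω / beta n α (max (R ω) 1)) + (1 - α) / (n + 1) * V ω :=
    div_eq_add_div_beta hα (Vc_le_Rc p I (τ ω) ω) (Rc_le p (τ ω) ω)
  have hFDP : Integrable (fun ω => (V ω : ℝ) / R ω) μ := by
    have hm : Measurable fun ω => (V ω : ℝ) / R ω :=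
      (measurable_from_nat.comp hV).div (measurable_from_nat.comp hR)
    refine .of_bound hm.aestronglyMeasurable 1 (ae_of_all _ fun ω => ?_)
    rw [Real.norm_of_nonneg (by positivity)]
    exact div_le_one_of_le₀ (by exact_mod_cast Vc_le_Rc p I (τ ω) ω) (Nat.cast_nonneg _)
  have hVint : Integrable (fun ω => (V ω : ℝ)) μ := by
    refine .of_bound (measurable_from_nat.comp hV).aestronglyMeasurable n (ae_of_all _ fun ω => ?_)
    rw [Real.norm_natCast]
    exact_mod_cast (Vc_le_Rc p I (τ ω) ω).trans (Rc_le p (τ ω) ω)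
  -- No a priori bound on `V / β_R` is needed: by the split it is a combination of `V / R` and `V`.
  have hVβ : Integrable (fun ω => (V ω : ℝ) / beta n α (max (R ω) 1)) μ := by
    refine ((hFDP.sub (hVint.const_mul ((1 - α) / (n + 1)))).const_mul (α / (n + 1))⁻¹).congr
      (ae_of_all _ fun ω => ?_)
    simp only [Pi.sub_apply, hsplit ω]
    field_simp
    ring
  rw [integral_congr_ae (ae_of_all _ hsplit), integral_add (hVβ.const_mul _) (hVint.const_mul _),
    integral_const_mul, integral_const_mul]

theorem fdr_control_of_two_bounds_general {n : ℕ} [MeasurableSpace Ω] (μ : Measure Ω)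
    [IsProbabilityMeasure μ] (p : Fin n → Ω → ℝ) (I0 : Finset (Fin n)) (α : ℝ)
    (hα : α ∈ Set.Ioo (0 : ℝ) 1) (hpm : ∀ i, Measurable (p i))
    (crit : ℕ → ℝ)
    (τ : Ω → ℝ) (hτ : τ = tauSD p crit ∨ τ = tauSU p crit)
    (h1 : ∫ ω, (Vc p I0 (τ ω) ω : ℝ) / beta n α (max (Rc p (τ ω) ω) 1) ∂μ ≤ I0.card)
    (h2 : ∫ ω, (Vc p I0 (τ ω) ω : ℝ) ∂μ ≤ α / (1 - α) * ((n - I0.card : ℕ) + 1)) :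
    ∫ ω, (Vc p I0 (τ ω) ω : ℝ) / (Rc p (τ ω) ω : ℝ) ∂μ ≤ α := by
  obtain ⟨hα0, hα1⟩ := hα
  have hτm : Measurable τ := by
    rcases hτ with rfl | rfl
    exacts [measurable_tauSD hpm crit, measurable_tauSU hpm crit]
  have hcard : I0.card ≤ n := by simpa using I0.card_le_univ
  rw [integral_Vc_div_Rc_eq μ hpm I0 hα0 hτm]
  calc _ ≤ α / (n + 1) * I0.card +
        (1 - α) / (n + 1) * (α / (1 - α) * ((n - I0.card : ℕ) + 1)) := by gcongr
    _ = α := by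
        rw [Nat.cast_sub hcard]
        field_simp
        ring

/-- sufficient conditions for FDR control at level `α`. -/
theorem fdr_control_of_two_bounds {n : ℕ} [MeasurableSpace Ω] (μ : Measure Ω)
    [IsProbabilityMeasure μ] (p : Fin n → Ω → ℝ) (I0 : Finset (Fin n)) (α : ℝ)
    (hn : 1 ≤ n) (hα : α ∈ Set.Ioo (0 : ℝ) 1) (hI0 : I0.Nonempty)
    (hp01 : ∀ i ω, p i ω ∈ Set.Icc (0 : ℝ) 1) (hpm : ∀ i, Measurable (p i))
    (crit : ℕ → ℝ)
    (hcrit_mono : ∀ i j, 1 ≤ i → i ≤ j → j ≤ n → crit i ≤ crit j)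
    (hcrit_pos : ∀ i, 1 ≤ i → i ≤ n → 0 < crit i)
    (hcrit_le : ∀ i, 1 ≤ i → i ≤ n → crit i ≤ beta n α i)
    (τ : Ω → ℝ) (hτ : τ = tauSD p crit ∨ τ = tauSU p crit)
    (h1 : ∫ ω, (Vc p I0 (τ ω) ω : ℝ) / beta n α (max (Rc p (τ ω) ω) 1) ∂μ ≤ I0.card)
    (h2 : ∫ ω, (Vc p I0 (τ ω) ω : ℝ) ∂μ ≤ α / (1 - α) * ((n - I0.card : ℕ) + 1)) :
    ∫ ω, (Vc p I0 (τ ω) ω : ℝ) / (Rc p (τ ω) ω : ℝ) ∂μ ≤ α :=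
  fdr_control_of_two_bounds_general μ p I0 α hα hpm crit τ hτ h1 h2

end
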